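/- Let N ≥ 2, 0 < s < 1 with N > 2s, and let 0 < κ < N − 2s. Then there is a constant C > 0 such that for all y ∈ ℝ^N: ∫_{ℝ^N} |x|^{−(N−2s)} (1+|y−x|)^{−(2s+κ)} dx ≤ C (1+|y|)^{−κ}. -/

import Mathlib

open MeasureTheory Metric Set Module
open scoped ENNReal

namespace Stmt3Aux

variable {E : Type*} [NormedAddCommGroup E] [NormedSpace ℝ E] [FiniteDimensional ℝ E]
  [MeasurableSpace E] [BorelSpace E] (μ : Measure E) [μ.IsAddHaarMeasure]

lemma lintegral_scale {c : ℝ} (hc : 0 < c) {g : E → ℝ≥0∞} (hg : Measurable g) :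
    ∫⁻ x, g x ∂μ = ENNReal.ofReal (c ^ finrank ℝ E) * ∫⁻ x, g (c • x) ∂μ := by
  have h1 : ∫⁻ x, g (c • x) ∂μ = ∫⁻ x, g x ∂(Measure.map (fun x => c • x) μ) :=
    (lintegral_map hg (measurable_const_smul c)).symm
  rw [h1, Measure.map_addHaar_smul μ hc.ne', lintegral_smul_measure, smul_eq_mul, ← mul_assoc,
    abs_of_nonneg (by positivity), ← ENNReal.ofReal_mul (by positivity),
    mul_inv_cancel₀ (by positivity), ENNReal.ofReal_one, one_mul]

lemma lintegral_ball_rpow (a : ℝ) {ρ : ℝ} (hρ : 0 < ρ) :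
    ∫⁻ x in ball (0:E) ρ, ENNReal.ofReal (‖x‖ ^ (-a)) ∂μ
      = ENNReal.ofReal (ρ ^ ((finrank ℝ E : ℝ) - a)) *
        ∫⁻ x in ball (0:E) 1, ENNReal.ofReal (‖x‖ ^ (-a)) ∂μ := by
  have hmeas : Measurable fun x : E => ENNReal.ofReal (‖x‖ ^ (-a)) := by fun_prop
  have key : ∀ x : E, ((ball (0:E) ρ).indicator fun x => ENNReal.ofReal (‖x‖ ^ (-a))) (ρ • x)
      = ENNReal.ofReal (ρ ^ (-a)) *
        ((ball (0:E) 1).indicator fun x => ENNReal.ofReal (‖x‖ ^ (-a))) x := by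
    intro x
    have hmem : ρ • x ∈ ball (0:E) ρ ↔ x ∈ ball (0:E) 1 := by
      simp only [mem_ball_zero_iff, norm_smul, Real.norm_eq_abs, abs_of_pos hρ]
      constructor
      · intro h; nlinarith [norm_nonneg x]
      · intro h; nlinarith [norm_nonneg x]
    by_cases hx : x ∈ ball (0:E) 1
    · rw [indicator_of_mem (hmem.mpr hx), indicator_of_mem hx, norm_smul,
        Real.norm_eq_abs, abs_of_pos hρ, Real.mul_rpow hρ.le (norm_nonneg x),
        ENNReal.ofReal_mul (by positivity)]
    · rw [indicator_of_notMem (fun h => hx (hmem.mp h)), indicator_of_notMem hx, mul_zero]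
  calc ∫⁻ x in ball (0:E) ρ, ENNReal.ofReal (‖x‖ ^ (-a)) ∂μ
      = ∫⁻ x, ((ball (0:E) ρ).indicator fun x => ENNReal.ofReal (‖x‖ ^ (-a))) x ∂μ :=
        (lintegral_indicator measurableSet_ball _).symm
    _ = ENNReal.ofReal (ρ ^ finrank ℝ E) *
        ∫⁻ x, ((ball (0:E) ρ).indicator fun x => ENNReal.ofReal (‖x‖ ^ (-a))) (ρ • x) ∂μ :=
        lintegral_scale μ hρ (hmeas.indicator measurableSet_ball)
    _ = ENNReal.ofReal (ρ ^ finrank ℝ E) * (ENNReal.ofReal (ρ ^ (-a)) *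
        ∫⁻ x, ((ball (0:E) 1).indicator fun x => ENNReal.ofReal (‖x‖ ^ (-a))) x ∂μ) := by
        rw [← lintegral_const_mul _ (hmeas.indicator measurableSet_ball)]
        exact congrArg _ (lintegral_congr key)
    _ = _ := by
        rw [lintegral_indicator measurableSet_ball, ← mul_assoc,
          ← ENNReal.ofReal_mul (by positivity), ← Real.rpow_natCast ρ (finrank ℝ E),
          ← Real.rpow_add hρ, sub_eq_add_neg]

lemma lintegral_tail_rpow (b : ℝ) {ρ : ℝ} (hρ : 0 < ρ) :
    ∫⁻ x in {x : E | ρ ≤ ‖x‖}, ENNReal.ofReal (‖x‖ ^ (-b)) ∂μ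
      = ENNReal.ofReal (ρ ^ ((finrank ℝ E : ℝ) - b)) *
        ∫⁻ x in {x : E | 1 ≤ ‖x‖}, ENNReal.ofReal (‖x‖ ^ (-b)) ∂μ := by
  have hmeas : Measurable fun x : E => ENNReal.ofReal (‖x‖ ^ (-b)) := by fun_prop
  have hs : ∀ t : ℝ, MeasurableSet {x : E | t ≤ ‖x‖} :=
    fun t => measurableSet_le measurable_const measurable_norm
  have key : ∀ x : E, ({x : E | ρ ≤ ‖x‖}.indicator fun x => ENNReal.ofReal (‖x‖ ^ (-b))) (ρ • x)
      = ENNReal.ofReal (ρ ^ (-b)) *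
        ({x : E | 1 ≤ ‖x‖}.indicator fun x => ENNReal.ofReal (‖x‖ ^ (-b))) x := by
    intro x
    have hmem : ρ • x ∈ {x : E | ρ ≤ ‖x‖} ↔ x ∈ {x : E | 1 ≤ ‖x‖} := by
      simp only [mem_setOf_eq, norm_smul, Real.norm_eq_abs, abs_of_pos hρ]
      constructor
      · intro h; nlinarith [norm_nonneg x]
      · intro h; nlinarith [norm_nonneg x]
    by_cases hx : x ∈ {x : E | 1 ≤ ‖x‖}
    · rw [indicator_of_mem (hmem.mpr hx), indicator_of_mem hx, norm_smul,
        Real.norm_eq_abs, abs_of_pos hρ, Real.mul_rpow hρ.le (norm_nonneg x),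
        ENNReal.ofReal_mul (by positivity)]
    · rw [indicator_of_notMem (fun h => hx (hmem.mp h)), indicator_of_notMem hx, mul_zero]
  calc ∫⁻ x in {x : E | ρ ≤ ‖x‖}, ENNReal.ofReal (‖x‖ ^ (-b)) ∂μ
      = ∫⁻ x, ({x : E | ρ ≤ ‖x‖}.indicator fun x => ENNReal.ofReal (‖x‖ ^ (-b))) x ∂μ :=
        (lintegral_indicator (hs ρ) _).symm
    _ = ENNReal.ofReal (ρ ^ finrank ℝ E) *
        ∫⁻ x, ({x : E | ρ ≤ ‖x‖}.indicator fun x => ENNReal.ofReal (‖x‖ ^ (-b))) (ρ • x) ∂μ :=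
        lintegral_scale μ hρ (hmeas.indicator (hs ρ))
    _ = ENNReal.ofReal (ρ ^ finrank ℝ E) * (ENNReal.ofReal (ρ ^ (-b)) *
        ∫⁻ x, ({x : E | 1 ≤ ‖x‖}.indicator fun x => ENNReal.ofReal (‖x‖ ^ (-b))) x ∂μ) := by
        rw [← lintegral_const_mul _ (hmeas.indicator (hs 1))]
        exact congrArg _ (lintegral_congr key)
    _ = _ := by
        rw [lintegral_indicator (hs 1), ← mul_assoc,
          ← ENNReal.ofReal_mul (by positivity), ← Real.rpow_natCast ρ (finrank ℝ E),
          ← Real.rpow_add hρ, sub_eq_add_neg]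

end Stmt3Aux


namespace Stmt3Aux
variable {E : Type*} [NormedAddCommGroup E] [NormedSpace ℝ E] [FiniteDimensional ℝ E]
  [MeasurableSpace E] [BorelSpace E] (μ : Measure E) [μ.IsAddHaarMeasure]

lemma finite_ball_rpow {a : ℝ} (ha : 0 < a) (haN : a < (finrank ℝ E : ℝ)) :
    ∫⁻ x in ball (0:E) 1, ENNReal.ofReal (‖x‖ ^ (-a)) ∂μ < ∞ := by
  haveI : Nontrivial E := by
    have h : 0 < finrank ℝ E := by exact_mod_cast ha.trans haN
    exact Module.nontrivial_of_finrank_pos (R := ℝ) h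
  have hq0 : (0:ℝ) < 2 ^ (a - (finrank ℝ E : ℝ)) := Real.rpow_pos_of_pos two_pos _
  have hq1 : (2:ℝ) ^ (a - (finrank ℝ E : ℝ)) < 1 :=
    Real.rpow_lt_one_of_one_lt_of_neg one_lt_two (by linarith)
  set T : ℕ → Set E := fun m =>
    {x : E | (2:ℝ) ^ (-((m:ℝ) + 1)) ≤ ‖x‖} ∩ ball (0:E) ((2:ℝ) ^ (-(m:ℝ))) with hT
  have hcover : ball (0:E) 1 ⊆ {(0:E)} ∪ ⋃ m, T m := by
    intro x hx
    rcases eq_or_ne x 0 with h0 | h0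
    · exact Or.inl (by simp [h0])
    right
    have hx0 : 0 < ‖x‖ := norm_pos_iff.mpr h0
    have hx1 : ‖x‖ < 1 := mem_ball_zero_iff.mp hx
    obtain ⟨n, hn1, hn2⟩ := exists_mem_Ico_zpow hx0 one_lt_two
    have hn0 : n < 0 := by
      by_contra h
      push_neg at h
      have h1 : ((2:ℝ) ^ (0:ℤ)) ≤ 2 ^ n := zpow_le_zpow_right₀ one_le_two h
      simp only [zpow_zero] at h1
      linarith
    set m : ℕ := (-(n+1)).toNat with hm
    have hmn : (m:ℤ) = -(n+1) := Int.toNat_of_nonneg (by omega)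
    have hc1 : -((m:ℝ)+1) = (n:ℝ) := by
      have : (m:ℝ) = -((n:ℝ)+1) := by exact_mod_cast hmn
      linarith
    have hc2 : -(m:ℝ) = ((n:ℝ)+1) := by
      have : (m:ℝ) = -((n:ℝ)+1) := by exact_mod_cast hmn
      linarith
    refine mem_iUnion.mpr ⟨m, ⟨?_, ?_⟩⟩
    · show (2:ℝ) ^ (-((m:ℝ)+1)) ≤ ‖x‖
      rw [hc1, show ((n:ℝ) : ℝ) = ((n:ℤ) : ℝ) from rfl, Real.rpow_intCast]
      exact hn1
    · show x ∈ ball (0:E) ((2:ℝ) ^ (-(m:ℝ)))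
      rw [mem_ball_zero_iff, hc2, show ((n:ℝ)+1 : ℝ) = (((n+1):ℤ) : ℝ) by push_cast; ring,
        Real.rpow_intCast]
      exact hn2
  have hterm : ∀ m : ℕ, ∫⁻ x in T m, ENNReal.ofReal (‖x‖ ^ (-a)) ∂μ ≤
      (ENNReal.ofReal ((2:ℝ) ^ a) * μ (ball (0:E) 1)) *
        ENNReal.ofReal ((2:ℝ) ^ (a - (finrank ℝ E : ℝ))) ^ m := by
    intro m
    have hb0 : (0:ℝ) < (2:ℝ) ^ (-((m:ℝ)+1)) := Real.rpow_pos_of_pos two_pos _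
    have key : ((2:ℝ) ^ (-((m:ℝ)+1))) ^ (-a) * ((2:ℝ) ^ (-(m:ℝ))) ^ (finrank ℝ E)
        = 2 ^ a * ((2:ℝ) ^ (a - (finrank ℝ E : ℝ))) ^ m := by
      rw [← Real.rpow_natCast ((2:ℝ) ^ (-(m:ℝ))) (finrank ℝ E),
        ← Real.rpow_natCast ((2:ℝ) ^ (a - (finrank ℝ E : ℝ))) m,
        ← Real.rpow_mul (by norm_num : (0:ℝ) ≤ 2),
        ← Real.rpow_mul (by norm_num : (0:ℝ) ≤ 2),
        ← Real.rpow_mul (by norm_num : (0:ℝ) ≤ 2),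
        ← Real.rpow_add two_pos, ← Real.rpow_add two_pos]
      congr 1
      ring
    calc ∫⁻ x in T m, ENNReal.ofReal (‖x‖ ^ (-a)) ∂μ
        ≤ ∫⁻ _x in T m, ENNReal.ofReal (((2:ℝ) ^ (-((m:ℝ)+1))) ^ (-a)) ∂μ := by
          refine setLIntegral_mono measurable_const fun x hx => ?_
          exact ENNReal.ofReal_le_ofReal
            (Real.rpow_le_rpow_of_nonpos hb0 hx.1 (neg_nonpos.mpr ha.le))
      _ = ENNReal.ofReal (((2:ℝ) ^ (-((m:ℝ)+1))) ^ (-a)) * μ (T m) := setLIntegral_const _ _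
      _ ≤ ENNReal.ofReal (((2:ℝ) ^ (-((m:ℝ)+1))) ^ (-a)) *
          (ENNReal.ofReal (((2:ℝ) ^ (-(m:ℝ))) ^ (finrank ℝ E)) * μ (ball (0:E) 1)) := by
          gcongr
          rw [← Measure.addHaar_ball μ (0:E) (le_of_lt (Real.rpow_pos_of_pos two_pos _))]
          exact measure_mono inter_subset_right
      _ = _ := by
          rw [← mul_assoc, ← ENNReal.ofReal_mul (by positivity), key,
            ENNReal.ofReal_mul (by positivity), ENNReal.ofReal_pow (by positivity)]
          ring
  calc ∫⁻ x in ball (0:E) 1, ENNReal.ofReal (‖x‖ ^ (-a)) ∂μ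
      ≤ ∫⁻ x in {(0:E)} ∪ ⋃ m, T m, ENNReal.ofReal (‖x‖ ^ (-a)) ∂μ := lintegral_mono_set hcover
    _ ≤ (∫⁻ x in {(0:E)}, ENNReal.ofReal (‖x‖ ^ (-a)) ∂μ) +
        ∫⁻ x in ⋃ m, T m, ENNReal.ofReal (‖x‖ ^ (-a)) ∂μ := lintegral_union_le _ _ _
    _ = ∫⁻ x in ⋃ m, T m, ENNReal.ofReal (‖x‖ ^ (-a)) ∂μ := by
        rw [Measure.restrict_eq_zero.mpr (measure_singleton 0), lintegral_zero_measure, zero_add]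
    _ ≤ ∑' m, ∫⁻ x in T m, ENNReal.ofReal (‖x‖ ^ (-a)) ∂μ := lintegral_iUnion_le _ _
    _ ≤ ∑' m : ℕ, (ENNReal.ofReal ((2:ℝ) ^ a) * μ (ball (0:E) 1)) *
        ENNReal.ofReal ((2:ℝ) ^ (a - (finrank ℝ E : ℝ))) ^ m := ENNReal.tsum_le_tsum hterm
    _ < ∞ := by
        rw [ENNReal.tsum_mul_left, ENNReal.tsum_geometric]
        refine ENNReal.mul_lt_top
          (ENNReal.mul_lt_top ENNReal.ofReal_lt_top measure_ball_lt_top) ?_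
        rw [ENNReal.inv_lt_top]
        exact tsub_pos_of_lt (ENNReal.ofReal_lt_one.mpr hq1)

lemma finite_tail_rpow {b : ℝ} (hb : (finrank ℝ E : ℝ) < b) :
    ∫⁻ x in {x : E | 1 ≤ ‖x‖}, ENNReal.ofReal (‖x‖ ^ (-b)) ∂μ < ∞ := by
  have hb0 : 0 < b := lt_of_le_of_lt (Nat.cast_nonneg _) hb
  have hpt : ∀ x ∈ {x : E | 1 ≤ ‖x‖},
      ENNReal.ofReal (‖x‖ ^ (-b)) ≤ ENNReal.ofReal ((2:ℝ) ^ b * (1 + ‖x‖) ^ (-b)) := by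
    intro x hx
    apply ENNReal.ofReal_le_ofReal
    have hx1 : (1:ℝ) ≤ ‖x‖ := hx
    have h1 : (0:ℝ) < ‖x‖ := lt_of_lt_of_le one_pos hx1
    have h2 : (1 + ‖x‖) ≤ 2 * ‖x‖ := by linarith
    have h3 : (2 * ‖x‖) ^ (-b) ≤ (1 + ‖x‖) ^ (-b) :=
      Real.rpow_le_rpow_of_nonpos (by positivity) h2 (neg_nonpos.mpr hb0.le)
    calc ‖x‖ ^ (-b) = 2 ^ b * (2 ^ (-b) * ‖x‖ ^ (-b)) := by
          rw [← mul_assoc, ← Real.rpow_add two_pos, add_neg_cancel, Real.rpow_zero, one_mul]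
      _ = 2 ^ b * (2 * ‖x‖) ^ (-b) := by rw [Real.mul_rpow (by norm_num) (norm_nonneg x)]
      _ ≤ 2 ^ b * (1 + ‖x‖) ^ (-b) :=
          mul_le_mul_of_nonneg_left h3 (le_of_lt (Real.rpow_pos_of_pos two_pos b))
  calc ∫⁻ x in {x : E | 1 ≤ ‖x‖}, ENNReal.ofReal (‖x‖ ^ (-b)) ∂μ
      ≤ ∫⁻ x in {x : E | 1 ≤ ‖x‖}, ENNReal.ofReal ((2:ℝ) ^ b * (1 + ‖x‖) ^ (-b)) ∂μ :=
        setLIntegral_mono (by fun_prop) hpt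
    _ ≤ ∫⁻ x, ENNReal.ofReal ((2:ℝ) ^ b * (1 + ‖x‖) ^ (-b)) ∂μ := setLIntegral_le_lintegral _ _
    _ = ENNReal.ofReal ((2:ℝ) ^ b) * ∫⁻ x, ENNReal.ofReal ((1 + ‖x‖) ^ (-b)) ∂μ := by
        simp_rw [ENNReal.ofReal_mul (le_of_lt (Real.rpow_pos_of_pos two_pos b))]
        exact lintegral_const_mul _ (by fun_prop)
    _ < ∞ := ENNReal.mul_lt_top ENNReal.ofReal_lt_top (finite_integral_one_add_norm hb)

end Stmt3Aux


open MeasureTheory Metric Set Module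
open scoped ENNReal

section MainProof

set_option maxHeartbeats 1000000 in
theorem stmt_3 (N : ℕ) (hN : 2 ≤ N) (s κ : ℝ) (hs0 : 0 < s) (hs1 : s < 1)
    (hNs : 2 * s < (N : ℝ)) (hκ0 : 0 < κ) (hκ : κ < (N : ℝ) - 2 * s) :
    ∃ C : ℝ, 0 < C ∧ ∀ y : EuclideanSpace ℝ (Fin N),
      (∫ x : EuclideanSpace ℝ (Fin N),
          ‖x‖ ^ (-((N : ℝ) - 2 * s)) * (1 + ‖y - x‖) ^ (-(2 * s + κ))) ≤
        C * (1 + ‖y‖) ^ (-κ) := by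
  have hdim : finrank ℝ (EuclideanSpace ℝ (Fin N)) = N := finrank_euclideanSpace_fin
  haveI : Nontrivial (EuclideanSpace ℝ (Fin N)) :=
    Module.nontrivial_of_finrank_pos (R := ℝ) (by rw [hdim]; omega)
  have hα0 : 0 < (N:ℝ) - 2*s := by linarith
  have hβ0 : 0 < 2*s + κ := by linarith
  set Iα := ∫⁻ x in ball (0 : EuclideanSpace ℝ (Fin N)) 1,
      ENNReal.ofReal (‖x‖ ^ (-((N:ℝ) - 2*s))) with hIα
  set Iβ := ∫⁻ x in ball (0 : EuclideanSpace ℝ (Fin N)) 1,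
      ENNReal.ofReal (‖x‖ ^ (-(2*s + κ))) with hIβ
  set Tκ := ∫⁻ x in {x : EuclideanSpace ℝ (Fin N) | 1 ≤ ‖x‖},
      ENNReal.ofReal (‖x‖ ^ (-((N:ℝ) + κ))) with hTκ
  set μB := volume (ball (0 : EuclideanSpace ℝ (Fin N)) 1) with hμB
  set K := ENNReal.ofReal ((2:ℝ) ^ κ) * Iα
    + ENNReal.ofReal ((2:ℝ) ^ (((N:ℝ) - 2*s) + (N:ℝ) - (2*s + κ))) * Iβ
    + ENNReal.ofReal ((2:ℝ) ^ (((N:ℝ) - 2*s) + (N:ℝ))) * μB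
    + ENNReal.ofReal ((2:ℝ) ^ (((N:ℝ) - 2*s) - κ)) * Tκ with hKdef
  have hIαfin : Iα < ∞ := Stmt3Aux.finite_ball_rpow volume hα0 (by rw [hdim]; linarith)
  have hIβfin : Iβ < ∞ := Stmt3Aux.finite_ball_rpow volume hβ0 (by rw [hdim]; linarith)
  have hTκfin : Tκ < ∞ := Stmt3Aux.finite_tail_rpow volume (by rw [hdim]; linarith)
  have hμBfin : μB < ∞ := measure_ball_lt_top
  have hK : K ≠ ∞ :=
    ENNReal.add_ne_top.mpr ⟨ENNReal.add_ne_top.mpr ⟨ENNReal.add_ne_top.mpr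
      ⟨ENNReal.mul_ne_top ENNReal.ofReal_ne_top hIαfin.ne,
        ENNReal.mul_ne_top ENNReal.ofReal_ne_top hIβfin.ne⟩,
        ENNReal.mul_ne_top ENNReal.ofReal_ne_top hμBfin.ne⟩,
        ENNReal.mul_ne_top ENNReal.ofReal_ne_top hTκfin.ne⟩
  refine ⟨K.toReal + 1, by positivity, fun y => ?_⟩
  set R := 1 + ‖y‖ with hRdef
  have hR1 : 1 ≤ R := by rw [hRdef]; linarith [norm_nonneg y]
  have hR0 : (0:ℝ) < R := by linarith
  have hR2 : (0:ℝ) < R/2 := by linarith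
  have h2R : (0:ℝ) < 2*R := by linarith
  -- real exponent identities
  have hhalf : ∀ t : ℝ, (R/2)^t = R^t * (2:ℝ)^(-t) := fun t => by
    rw [Real.div_rpow hR0.le (by norm_num), Real.rpow_neg (by norm_num), div_eq_mul_inv]
  have hdouble : ∀ t : ℝ, (2*R)^t = (2:ℝ)^t * R^t := fun t =>
    Real.mul_rpow (by norm_num) hR0.le
  have hmul : ∀ u v u' v' : ℝ, (R ^ u * (2:ℝ) ^ v) * (R ^ u' * (2:ℝ) ^ v')
      = R ^ (u + u') * (2:ℝ) ^ (v + v') := fun u v u' v' => by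
    rw [Real.rpow_add hR0, Real.rpow_add two_pos]; ring
  have e1 : (R/2) ^ ((N:ℝ) - ((N:ℝ) - 2*s)) * (R/2) ^ (-(2*s+κ)) = R ^ (-κ) * (2:ℝ) ^ κ := by
    rw [← Real.rpow_add hR2, show ((N:ℝ) - ((N:ℝ) - 2*s)) + (-(2*s+κ)) = -κ by ring,
      hhalf, neg_neg]
  have e2 : (R/2) ^ (-((N:ℝ)-2*s)) * (2*R) ^ ((N:ℝ) - (2*s+κ))
      = R ^ (-κ) * (2:ℝ) ^ (((N:ℝ) - 2*s) + (N:ℝ) - (2*s+κ)) := by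
    rw [hhalf, hdouble, mul_comm ((2:ℝ) ^ ((N:ℝ) - (2*s+κ))) (R ^ ((N:ℝ) - (2*s+κ))), hmul,
      show (-((N:ℝ)-2*s)) + ((N:ℝ) - (2*s+κ)) = -κ by ring,
      show (-(-((N:ℝ)-2*s))) + ((N:ℝ) - (2*s+κ)) = ((N:ℝ) - 2*s) + (N:ℝ) - (2*s+κ) by ring]
  have e3 : ((R/2) ^ (-((N:ℝ)-2*s)) * R ^ (-(2*s+κ))) * (2*R) ^ ((N:ℝ))
      = R ^ (-κ) * (2:ℝ) ^ (((N:ℝ) - 2*s) + (N:ℝ)) := by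
    rw [hhalf, hdouble, mul_comm ((2:ℝ) ^ ((N:ℝ))) (R ^ ((N:ℝ))),
      mul_right_comm (R ^ (-((N:ℝ)-2*s))) ((2:ℝ) ^ (-(-((N:ℝ)-2*s)))) (R ^ (-(2*s+κ))),
      ← Real.rpow_add hR0, hmul,
      show (-((N:ℝ)-2*s) + -(2*s+κ)) + (N:ℝ) = -κ by ring,
      show (-(-((N:ℝ)-2*s))) + (N:ℝ) = ((N:ℝ) - 2*s) + (N:ℝ) by ring]
  have e4 : (2:ℝ) ^ ((N:ℝ)-2*s) * (2*R) ^ ((N:ℝ) - ((N:ℝ)+κ))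
      = R ^ (-κ) * (2:ℝ) ^ (((N:ℝ)-2*s) - κ) := by
    rw [hdouble, ← mul_assoc, ← Real.rpow_add two_pos,
      show ((N:ℝ)-2*s) + ((N:ℝ) - ((N:ℝ)+κ)) = ((N:ℝ)-2*s) - κ by ring,
      show (N:ℝ) - ((N:ℝ)+κ) = -κ by ring, mul_comm]
  -- measurability
  have hmα : Measurable fun x : EuclideanSpace ℝ (Fin N) =>
      ENNReal.ofReal (‖x‖ ^ (-((N:ℝ) - 2*s))) := by fun_prop
  have hg2m : Measurable ((closedBall (0 : EuclideanSpace ℝ (Fin N)) R).indicator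
      fun z => ENNReal.ofReal ((1 + ‖z‖) ^ (-(2*s+κ)))) :=
    Measurable.indicator (by fun_prop) measurableSet_closedBall
  have hsetm : MeasurableSet {z : EuclideanSpace ℝ (Fin N) | 2*R < ‖z‖} :=
    measurableSet_lt measurable_const measurable_norm
  have hg4m : Measurable ({z : EuclideanSpace ℝ (Fin N) | 2*R < ‖z‖}.indicator
      fun z => ENNReal.ofReal (‖z‖ ^ (-((N:ℝ)+κ)))) :=
    Measurable.indicator (by fun_prop) hsetm
  set G1 : EuclideanSpace ℝ (Fin N) → ℝ≥0∞ := fun x =>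
    (ball (0 : EuclideanSpace ℝ (Fin N)) (R/2)).indicator
      (fun x => ENNReal.ofReal (‖x‖ ^ (-((N:ℝ) - 2*s)))) x *
      ENNReal.ofReal ((R/2) ^ (-(2*s+κ))) with hG1
  set G2 : EuclideanSpace ℝ (Fin N) → ℝ≥0∞ := fun x =>
    ENNReal.ofReal ((R/2) ^ (-((N:ℝ) - 2*s))) *
      (closedBall (0 : EuclideanSpace ℝ (Fin N)) R).indicator
        (fun z => ENNReal.ofReal ((1 + ‖z‖) ^ (-(2*s+κ)))) (y - x) with hG2
  set G3 : EuclideanSpace ℝ (Fin N) → ℝ≥0∞ := fun x =>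
    ENNReal.ofReal ((R/2) ^ (-((N:ℝ) - 2*s)) * R ^ (-(2*s+κ))) *
      (closedBall y (2*R)).indicator (fun _ => (1:ℝ≥0∞)) x with hG3
  set G4 : EuclideanSpace ℝ (Fin N) → ℝ≥0∞ := fun x =>
    ENNReal.ofReal ((2:ℝ) ^ ((N:ℝ) - 2*s)) *
      {z : EuclideanSpace ℝ (Fin N) | 2*R < ‖z‖}.indicator
        (fun z => ENNReal.ofReal (‖z‖ ^ (-((N:ℝ)+κ)))) (y - x) with hG4
  have hpoint : ∀ x : EuclideanSpace ℝ (Fin N),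
      ENNReal.ofReal (‖x‖ ^ (-((N:ℝ) - 2*s))) * ENNReal.ofReal ((1 + ‖y - x‖) ^ (-(2*s+κ)))
        ≤ G1 x + G2 x + G3 x + G4 x := by
    intro x
    rcases lt_or_ge ‖x‖ (R/2) with hx | hx
    · have h1 : R/2 ≤ 1 + ‖y - x‖ := by
        have h := norm_sub_norm_le y x
        rw [hRdef] at hx ⊢
        linarith
      have hle : ENNReal.ofReal (‖x‖ ^ (-((N:ℝ) - 2*s))) *
          ENNReal.ofReal ((1 + ‖y - x‖) ^ (-(2*s+κ))) ≤ G1 x := by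
        simp only [hG1]
        rw [indicator_of_mem (mem_ball_zero_iff.mpr hx)]
        exact mul_le_mul_right (ENNReal.ofReal_le_ofReal
          (Real.rpow_le_rpow_of_nonpos hR2 h1 (neg_nonpos.mpr hβ0.le))) _
      exact hle.trans (((self_le_add_right _ _).trans (self_le_add_right _ _)).trans
        (self_le_add_right _ _))
    · have hA : ENNReal.ofReal (‖x‖ ^ (-((N:ℝ) - 2*s))) ≤
          ENNReal.ofReal ((R/2) ^ (-((N:ℝ) - 2*s))) :=
        ENNReal.ofReal_le_ofReal
          (Real.rpow_le_rpow_of_nonpos hR2 hx (neg_nonpos.mpr hα0.le))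
      rcases le_or_gt ‖y - x‖ R with h2 | h2
      · have hle : ENNReal.ofReal (‖x‖ ^ (-((N:ℝ) - 2*s))) *
            ENNReal.ofReal ((1 + ‖y - x‖) ^ (-(2*s+κ))) ≤ G2 x := by
          simp only [hG2]
          rw [indicator_of_mem (mem_closedBall_zero_iff.mpr h2)]
          exact mul_le_mul_left hA _
        exact hle.trans (((self_le_add_left _ _).trans (self_le_add_right _ _)).trans
          (self_le_add_right _ _))
      rcases le_or_gt ‖y - x‖ (2*R) with h3 | h3
      · have hmem : x ∈ closedBall y (2*R) := by
          rw [mem_closedBall, dist_eq_norm, ← norm_neg (x - y), neg_sub]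
          exact h3
        have hB : ENNReal.ofReal ((1 + ‖y - x‖) ^ (-(2*s+κ))) ≤
            ENNReal.ofReal (R ^ (-(2*s+κ))) :=
          ENNReal.ofReal_le_ofReal (Real.rpow_le_rpow_of_nonpos hR0 (by linarith)
            (neg_nonpos.mpr hβ0.le))
        have hle : ENNReal.ofReal (‖x‖ ^ (-((N:ℝ) - 2*s))) *
            ENNReal.ofReal ((1 + ‖y - x‖) ^ (-(2*s+κ))) ≤ G3 x := by
          simp only [hG3]
          rw [indicator_of_mem hmem, mul_one, ENNReal.ofReal_mul (by positivity)]
          exact mul_le_mul' hA hB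
        exact hle.trans ((self_le_add_left _ _).trans (self_le_add_right _ _))
      · have hyx0 : (0:ℝ) < ‖y - x‖ := by linarith
        have hxbig : ‖y - x‖/2 ≤ ‖x‖ := by
          have h := norm_sub_le y x
          rw [hRdef] at h3
          linarith
        have hmem : y - x ∈ {z : EuclideanSpace ℝ (Fin N) | 2*R < ‖z‖} := h3
        have h4 : (‖y - x‖/2) ^ (-((N:ℝ)-2*s)) =
            ‖y - x‖ ^ (-((N:ℝ)-2*s)) * (2:ℝ) ^ ((N:ℝ)-2*s) := by
          rw [Real.div_rpow (norm_nonneg _) (by norm_num : (0:ℝ) ≤ 2), div_eq_mul_inv,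
            ← Real.rpow_neg (by norm_num : (0:ℝ) ≤ 2), neg_neg]
        have hb1 : ‖x‖ ^ (-((N:ℝ) - 2*s)) ≤
            (2:ℝ) ^ ((N:ℝ) - 2*s) * ‖y - x‖ ^ (-((N:ℝ) - 2*s)) := by
          have h5 : ‖x‖ ^ (-((N:ℝ) - 2*s)) ≤ (‖y - x‖/2) ^ (-((N:ℝ) - 2*s)) :=
            Real.rpow_le_rpow_of_nonpos (by linarith) hxbig (neg_nonpos.mpr hα0.le)
          rw [h4] at h5
          linarith [h5]
        have hb2 : (1 + ‖y - x‖) ^ (-(2*s+κ)) ≤ ‖y - x‖ ^ (-(2*s+κ)) :=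
          Real.rpow_le_rpow_of_nonpos hyx0 (by linarith) (neg_nonpos.mpr hβ0.le)
        have hle : ENNReal.ofReal (‖x‖ ^ (-((N:ℝ) - 2*s))) *
            ENNReal.ofReal ((1 + ‖y - x‖) ^ (-(2*s+κ))) ≤ G4 x := by
          simp only [hG4]
          rw [indicator_of_mem hmem]
          calc ENNReal.ofReal (‖x‖ ^ (-((N:ℝ) - 2*s))) *
              ENNReal.ofReal ((1 + ‖y - x‖) ^ (-(2*s+κ)))
              ≤ ENNReal.ofReal ((2:ℝ) ^ ((N:ℝ)-2*s) * ‖y - x‖ ^ (-((N:ℝ)-2*s))) *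
                ENNReal.ofReal (‖y - x‖ ^ (-(2*s+κ))) :=
                mul_le_mul' (ENNReal.ofReal_le_ofReal hb1) (ENNReal.ofReal_le_ofReal hb2)
            _ = ENNReal.ofReal ((2:ℝ) ^ ((N:ℝ)-2*s)) *
                ENNReal.ofReal (‖y - x‖ ^ (-((N:ℝ)+κ))) := by
                rw [ENNReal.ofReal_mul (by positivity), mul_assoc,
                  ← ENNReal.ofReal_mul (by positivity), ← Real.rpow_add hyx0,
                  show (-((N:ℝ)-2*s)) + (-(2*s+κ)) = -((N:ℝ)+κ) by ring]
        exact hle.trans (self_le_add_left _ _)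
  have hG1m : Measurable G1 := (hmα.indicator measurableSet_ball).mul_const _
  have hG2m : Measurable G2 := (hg2m.comp (measurable_const.sub measurable_id)).const_mul _
  have hG3m : Measurable G3 :=
    ((measurable_const.indicator measurableSet_closedBall : Measurable
      ((closedBall y (2*R)).indicator (fun _ => (1:ℝ≥0∞))))).const_mul _
  have hG4m : Measurable G4 := (hg4m.comp (measurable_const.sub measurable_id)).const_mul _
  have hcomp2 : Measurable fun x : EuclideanSpace ℝ (Fin N) =>
    (closedBall (0 : EuclideanSpace ℝ (Fin N)) R).indicator
      (fun z => ENNReal.ofReal ((1 + ‖z‖) ^ (-(2*s+κ)))) (y - x) :=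
    hg2m.comp (measurable_const.sub measurable_id)
  have hcomp4 : Measurable fun x : EuclideanSpace ℝ (Fin N) =>
    {z : EuclideanSpace ℝ (Fin N) | 2*R < ‖z‖}.indicator
      (fun z => ENNReal.ofReal (‖z‖ ^ (-((N:ℝ)+κ)))) (y - x) :=
    hg4m.comp (measurable_const.sub measurable_id)
  have B1 : ∫⁻ x, G1 x = ENNReal.ofReal (R ^ (-κ)) * (ENNReal.ofReal ((2:ℝ)^κ) * Iα) := by
    simp only [hG1]
    rw [lintegral_mul_const _ (hmα.indicator measurableSet_ball),
      lintegral_indicator measurableSet_ball,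
      Stmt3Aux.lintegral_ball_rpow volume ((N:ℝ) - 2*s) hR2, hdim, ← hIα,
      mul_right_comm, ← ENNReal.ofReal_mul (by positivity), e1,
      ENNReal.ofReal_mul (by positivity), mul_assoc]
  have hcmp : (∫⁻ z in closedBall (0 : EuclideanSpace ℝ (Fin N)) R,
      ENNReal.ofReal ((1 + ‖z‖) ^ (-(2*s+κ))))
      ≤ ∫⁻ z in ball (0 : EuclideanSpace ℝ (Fin N)) (2*R),
        ENNReal.ofReal (‖z‖ ^ (-(2*s+κ))) := by
    rw [← lintegral_indicator measurableSet_closedBall, ← lintegral_indicator measurableSet_ball]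
    refine lintegral_mono_ae ?_
    have h0 : ∀ᵐ z : EuclideanSpace ℝ (Fin N) ∂volume, z ≠ 0 := by
      rw [ae_iff]
      simp only [ne_eq, not_not, Set.setOf_eq_eq_singleton]
      exact measure_singleton 0
    filter_upwards [h0] with z hz
    by_cases hmem : z ∈ closedBall (0 : EuclideanSpace ℝ (Fin N)) R
    · have hmem2 : z ∈ ball (0 : EuclideanSpace ℝ (Fin N)) (2*R) :=
        mem_ball_zero_iff.mpr (lt_of_le_of_lt (mem_closedBall_zero_iff.mp hmem) (by linarith))
      rw [indicator_of_mem hmem, indicator_of_mem hmem2]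
      exact ENNReal.ofReal_le_ofReal (Real.rpow_le_rpow_of_nonpos (norm_pos_iff.mpr hz)
        (by linarith [norm_nonneg z]) (neg_nonpos.mpr hβ0.le))
    · rw [indicator_of_notMem hmem]
      exact zero_le
  have B2 : ∫⁻ x, G2 x ≤ ENNReal.ofReal (R ^ (-κ)) *
      (ENNReal.ofReal ((2:ℝ)^(((N:ℝ)-2*s)+(N:ℝ)-(2*s+κ))) * Iβ) := by
    simp only [hG2]
    rw [lintegral_const_mul _ hcomp2,
      (Measure.measurePreserving_sub_left volume y).lintegral_comp hg2m,
      lintegral_indicator measurableSet_closedBall]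
    calc ENNReal.ofReal ((R/2) ^ (-((N:ℝ)-2*s))) *
        ∫⁻ z in closedBall (0 : EuclideanSpace ℝ (Fin N)) R,
          ENNReal.ofReal ((1 + ‖z‖) ^ (-(2*s+κ)))
        ≤ ENNReal.ofReal ((R/2) ^ (-((N:ℝ)-2*s))) *
          ∫⁻ z in ball (0 : EuclideanSpace ℝ (Fin N)) (2*R),
            ENNReal.ofReal (‖z‖ ^ (-(2*s+κ))) := mul_le_mul_right hcmp _
      _ = ENNReal.ofReal (R ^ (-κ)) *
          (ENNReal.ofReal ((2:ℝ)^(((N:ℝ)-2*s)+(N:ℝ)-(2*s+κ))) * Iβ) := by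
          rw [Stmt3Aux.lintegral_ball_rpow volume (2*s+κ) h2R, hdim, ← hIβ, ← mul_assoc,
            ← ENNReal.ofReal_mul (by positivity), e2, ENNReal.ofReal_mul (by positivity),
            mul_assoc]
  have B3 : ∫⁻ x, G3 x = ENNReal.ofReal (R ^ (-κ)) *
      (ENNReal.ofReal ((2:ℝ)^(((N:ℝ)-2*s)+(N:ℝ))) * μB) := by
    simp only [hG3]
    rw [lintegral_const_mul _ (measurable_const.indicator measurableSet_closedBall),
      lintegral_indicator measurableSet_closedBall, setLIntegral_one,
      Measure.addHaar_closedBall volume y (by positivity : (0:ℝ) ≤ 2*R), hdim, ← hμB,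
      ← Real.rpow_natCast (2*R) N, ← mul_assoc, ← ENNReal.ofReal_mul (by positivity), e3,
      ENNReal.ofReal_mul (by positivity), mul_assoc]
  have B4 : ∫⁻ x, G4 x ≤ ENNReal.ofReal (R ^ (-κ)) *
      (ENNReal.ofReal ((2:ℝ)^(((N:ℝ)-2*s)-κ)) * Tκ) := by
    simp only [hG4]
    rw [lintegral_const_mul _ hcomp4,
      (Measure.measurePreserving_sub_left volume y).lintegral_comp hg4m,
      lintegral_indicator hsetm]
    calc ENNReal.ofReal ((2:ℝ)^((N:ℝ)-2*s)) *
        ∫⁻ z in {z : EuclideanSpace ℝ (Fin N) | 2*R < ‖z‖},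
          ENNReal.ofReal (‖z‖ ^ (-((N:ℝ)+κ)))
        ≤ ENNReal.ofReal ((2:ℝ)^((N:ℝ)-2*s)) *
          ∫⁻ z in {z : EuclideanSpace ℝ (Fin N) | 2*R ≤ ‖z‖},
            ENNReal.ofReal (‖z‖ ^ (-((N:ℝ)+κ))) :=
          by
            have hsub : {z : EuclideanSpace ℝ (Fin N) | 2*R < ‖z‖} ⊆
                {z : EuclideanSpace ℝ (Fin N) | 2*R ≤ ‖z‖} := by
              intro z hz
              simp only [Set.mem_setOf_eq] at hz ⊢
              exact le_of_lt hz
            exact mul_le_mul_right (lintegral_mono_set hsub) _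
      _ = ENNReal.ofReal (R ^ (-κ)) *
          (ENNReal.ofReal ((2:ℝ)^(((N:ℝ)-2*s)-κ)) * Tκ) := by
          rw [Stmt3Aux.lintegral_tail_rpow volume ((N:ℝ)+κ) h2R, hdim, ← hTκ, ← mul_assoc,
            ← ENNReal.ofReal_mul (by positivity), e4, ENNReal.ofReal_mul (by positivity),
            mul_assoc]
  have hmain : (∫⁻ x : EuclideanSpace ℝ (Fin N),
      ENNReal.ofReal (‖x‖ ^ (-((N:ℝ) - 2*s))) * ENNReal.ofReal ((1 + ‖y - x‖) ^ (-(2*s+κ))))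
      ≤ ENNReal.ofReal (R ^ (-κ)) * K := by
    calc (∫⁻ x : EuclideanSpace ℝ (Fin N),
        ENNReal.ofReal (‖x‖ ^ (-((N:ℝ) - 2*s))) * ENNReal.ofReal ((1 + ‖y - x‖) ^ (-(2*s+κ))))
        ≤ ∫⁻ x, (G1 x + G2 x + G3 x + G4 x) := lintegral_mono hpoint
      _ = (∫⁻ x, G1 x) + (∫⁻ x, G2 x) + (∫⁻ x, G3 x) + (∫⁻ x, G4 x) := by
          rw [lintegral_add_left (f := fun x => G1 x + G2 x + G3 x) ((hG1m.add hG2m).add hG3m),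
            lintegral_add_left (f := fun x => G1 x + G2 x) (hG1m.add hG2m), lintegral_add_left hG1m]
      _ ≤ ENNReal.ofReal (R ^ (-κ)) * (ENNReal.ofReal ((2:ℝ)^κ) * Iα)
          + ENNReal.ofReal (R ^ (-κ)) * (ENNReal.ofReal ((2:ℝ)^(((N:ℝ)-2*s)+(N:ℝ)-(2*s+κ))) * Iβ)
          + ENNReal.ofReal (R ^ (-κ)) * (ENNReal.ofReal ((2:ℝ)^(((N:ℝ)-2*s)+(N:ℝ))) * μB)
          + ENNReal.ofReal (R ^ (-κ)) * (ENNReal.ofReal ((2:ℝ)^(((N:ℝ)-2*s)-κ)) * Tκ) :=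
          add_le_add (add_le_add (add_le_add B1.le B2) B3.le) B4
      _ = ENNReal.ofReal (R ^ (-κ)) * K := by rw [hKdef]; ring
  have hnn : 0 ≤ᵐ[(volume : Measure (EuclideanSpace ℝ (Fin N)))]
      fun x : EuclideanSpace ℝ (Fin N) =>
      ‖x‖ ^ (-((N:ℝ) - 2*s)) * (1 + ‖y - x‖) ^ (-(2*s+κ)) :=
    Filter.Eventually.of_forall fun x => by positivity
  have hms : AEStronglyMeasurable (fun x : EuclideanSpace ℝ (Fin N) =>
      ‖x‖ ^ (-((N:ℝ) - 2*s)) * (1 + ‖y - x‖) ^ (-(2*s+κ))) volume :=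
    Measurable.aestronglyMeasurable (by fun_prop)
  rw [integral_eq_lintegral_of_nonneg_ae hnn hms]
  simp_rw [ENNReal.ofReal_mul (Real.rpow_nonneg (norm_nonneg _) _)]
  have hfin : ENNReal.ofReal (R ^ (-κ)) * K ≠ ∞ :=
    ENNReal.mul_ne_top ENNReal.ofReal_ne_top hK
  calc (∫⁻ x : EuclideanSpace ℝ (Fin N), ENNReal.ofReal (‖x‖ ^ (-((N:ℝ) - 2*s))) *
      ENNReal.ofReal ((1 + ‖y - x‖) ^ (-(2*s+κ)))).toReal
      ≤ (ENNReal.ofReal (R ^ (-κ)) * K).toReal := ENNReal.toReal_mono hfin hmain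
    _ = R ^ (-κ) * K.toReal := by
        rw [ENNReal.toReal_mul, ENNReal.toReal_ofReal (Real.rpow_nonneg hR0.le _)]
    _ ≤ R ^ (-κ) * (K.toReal + 1) := by
        have h := Real.rpow_nonneg hR0.le (-κ)
        nlinarith [h]
    _ = (K.toReal + 1) * R ^ (-κ) := mul_comm _ _


end MainProof
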